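/- Let ω ∈ (0,1) and define the jump function j(u) := η(u) − u = 1 − (3/2)u + √Δ_u/2 for u ∈ I_ω, with η, Δ_u, I_ω as in the context. If ω ∈ (0, 1/√3], then j attains its maximum over I_ω at u = 2/3 − ω/√3 (the unique point of I_ω where D(u) = D(η(u))). If ω ∈ (1/√3, 1), then j attains its maximum over I_ω at the right endpoint of I_ω, namely u = 1/2 − √(4ω²−1)/(2√3). -/

import Mathlib

/-!
Put `t = 2/3 - u`. Then `Δ_u = 4ω²/3 - 3t²` and `j = (3t + √(4ω²/3 - 3t²))/2`, a concave function
of `u` on the interval `[2/3 - 2ω/3, 2/3 + 2ω/3]` where `Δ_u ≥ 0`. It is bounded by `2ω/√3`,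
because `(4ω/√3 - 3t)² - Δ_u = 4(ω - √3 t)²`, with equality exactly at `u₀ = 2/3 - ω/√3`.
By concavity `j` increases up to `u₀`. If `ω ≤ 1/√3` the point `u₀` lies in `I_ω`; otherwise
`I_ω` ends to the left of `u₀`, so the maximum sits at its right endpoint.
The condition `D(u) = D(η u)` factors as `(u - η)(3(u + η) - 4) = 0`, and `u < 2/3` forces
`u + η = 4/3`, which pins down `u = u₀`.
-/

open Set

noncomputable section

lemma sq_sqrt_three : (√3)^2 = 3 := Real.sq_sqrt (by norm_num)

lemma div_sqrt_three (x : ℝ) : x / √3 = x * √3 / 3 := by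
  field_simp; rw [sq_sqrt_three]

lemma sqrt_div_two_sqrt_three (x : ℝ) : √x / (2 * √3) = √(3 * x) / 6 := by
  have hs := sq_sqrt_three
  rw [Real.sqrt_mul (by norm_num), div_eq_div_iff (by positivity) (by norm_num)]
  linear_combination (-2 * √x) * hs

theorem ConcaveOn.sqrt {E : Type*} [AddCommGroup E] [Module ℝ E] {s : Set E} {f : E → ℝ}
    (hf : ConcaveOn ℝ s f) (hf₀ : ∀ x ∈ s, 0 ≤ f x) : ConcaveOn ℝ s (fun x => √(f x)) :=
  ⟨hf.1, fun _ hx _ hy _ _ ha hb hab =>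
    (Real.strictConcaveOn_sqrt.concaveOn.2 (hf₀ _ hx) (hf₀ _ hy) ha hb hab).trans
      (Real.sqrt_le_sqrt (hf.2 hx hy ha hb hab))⟩

namespace CubicJump

def disc (ω u : ℝ) : ℝ := -3*u^2 + 4*u - 4/3 + 4*ω^2/3

def eta (ω u : ℝ) : ℝ := (2 - u + √(disc ω u))/2

def jump (ω u : ℝ) : ℝ := eta ω u - u

def derivP (ω u : ℝ) : ℝ := 3*u^2 - 4*u + (4 - ω^2)/3

variable {ω u v : ℝ}

lemma disc_eq_mul (ω u : ℝ) :
    disc ω u = 3 * (u - (2 - 2*ω)/3) * ((2 + 2*ω)/3 - u) := by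
  unfold disc; ring

lemma concaveOn_disc (ω : ℝ) : ConcaveOn ℝ univ (disc ω) := by
  refine ⟨convex_univ, fun x _ y _ a b ha hb hab => ?_⟩
  obtain rfl : b = 1 - a := by linarith
  simp only [disc, smul_eq_mul]
  nlinarith [mul_nonneg (mul_nonneg ha hb) (sq_nonneg (x - y))]

lemma concaveOn_jump : ConcaveOn ℝ (Icc ((2 - 2*ω)/3) ((2 + 2*ω)/3)) (jump ω) := by
  have hsqrt : ConcaveOn ℝ (Icc ((2 - 2*ω)/3) ((2 + 2*ω)/3)) (fun u => √(disc ω u)) :=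
    ((concaveOn_disc ω).subset (subset_univ _) (convex_Icc _ _)).sqrt fun u hu => by
      rw [disc_eq_mul]; nlinarith [hu.1, hu.2]
  refine ⟨convex_Icc _ _, fun x hx y hy a b ha hb hab => ?_⟩
  have := hsqrt.2 hx hy ha hb hab
  simp only [jump, eta, smul_eq_mul] at this ⊢
  linear_combination (1/2) * this + hab

lemma jump_le (hω : 0 ≤ ω) (hu : (2 - 2*ω)/3 ≤ u) : jump ω u ≤ 2*ω/√3 := by
  have hs := sq_sqrt_three
  have hs2 : 3/2 ≤ √3 := by nlinarith [Real.sqrt_nonneg 3]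
  simp only [div_sqrt_three]
  have hbound : √(disc ω u) ≤ 4*ω*√3/3 + 3*u - 2 := by
    rw [Real.sqrt_le_iff]
    constructor
    · nlinarith [mul_le_mul_of_nonneg_left hs2 hω]
    · unfold disc; nlinarith [sq_nonneg (ω - √3 * (2/3 - u))]
  unfold jump eta
  linarith

lemma jump_center (hω : 0 ≤ ω) : jump ω (2/3 - ω/√3) = 2*ω/√3 := by
  have hs := sq_sqrt_three
  simp only [div_sqrt_three]
  have : disc ω (2/3 - ω*√3/3) = (ω*√3/3)^2 := by
    unfold disc; linear_combination (-4*ω^2/9) * hs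
  rw [jump, eta, this, Real.sqrt_sq (by positivity)]
  ring

lemma center_mem_Icc (hω : 0 ≤ ω) : 2/3 - ω/√3 ∈ Icc ((2 - 2*ω)/3) ((2 - ω)/3) := by
  have hs := sq_sqrt_three
  have hs1 : 1 ≤ √3 := by nlinarith [Real.sqrt_nonneg 3]
  have hs2 : √3 ≤ 2 := by nlinarith [Real.sqrt_nonneg 3]
  rw [div_sqrt_three]
  constructor <;> nlinarith [mul_le_mul_of_nonneg_left hs1 hω, mul_le_mul_of_nonneg_left hs2 hω]

lemma jump_mono (hω : 0 ≤ ω) (hu : (2 - 2*ω)/3 ≤ u) (huv : u ≤ v) (hv : v ≤ 2/3 - ω/√3) :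
    jump ω u ≤ jump ω v := by
  have hc := center_mem_Icc hω
  have hchi : 2/3 - ω/√3 ≤ (2 + 2*ω)/3 := by linarith [hc.2]
  have := concaveOn_jump.min_le_of_mem_Icc ⟨hu, by linarith⟩ ⟨hc.1, hchi⟩ ⟨huv, hv⟩
  rwa [min_eq_left ((jump_le hω hu).trans (jump_center hω).ge)] at this

lemma eta_center (hω : 0 ≤ ω) : eta ω (2/3 - ω/√3) = 2/3 + ω/√3 := by
  have := jump_center hω
  rw [jump] at this
  linear_combination this

lemma derivP_eta_center (hω : 0 ≤ ω) :
    derivP ω (2/3 - ω/√3) = derivP ω (eta ω (2/3 - ω/√3)) := by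
  rw [eta_center hω]; unfold derivP; ring

lemma derivP_sub_derivP (ω x y : ℝ) : derivP ω x - derivP ω y = (x - y) * (3 * (x + y) - 4) := by
  unfold derivP; ring

lemma eq_center_of_derivP_eq (hω : 0 ≤ ω) (hu : u < 2/3)
    (h : derivP ω u = derivP ω (eta ω u)) : u = 2/3 - ω/√3 := by
  have hs := sq_sqrt_three
  have hS := Real.sqrt_nonneg (disc ω u)
  have hsqrt : √(disc ω u) = (2 - 3*u)/3 := by
    have := derivP_sub_derivP ω u (eta ω u)
    rw [h, sub_self, eq_comm, mul_eq_zero] at this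
    unfold eta at this
    rcases this with h1 | h1 <;> linarith
  have hdisc : disc ω u = ((2 - 3*u)/3)^2 := by
    rw [← hsqrt, Real.sq_sqrt (Real.sqrt_pos.1 (by linarith)).le]
  have hsq : (2 - 3*u)^2 = (ω*√3)^2 := by
    unfold disc at hdisc; linear_combination (-9/4) * hdisc - ω^2 * hs
  rw [pow_left_inj₀ (by linarith) (by positivity) two_ne_zero] at hsq
  rw [div_sqrt_three]
  linarith

lemma lower_le_endpoint (hω : 1/4 ≤ ω) :
    (2 - 2*ω)/3 ≤ 1/2 - √(4*ω^2 - 1)/(2*√3) := by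
  rw [sqrt_div_two_sqrt_three]
  have : √(3 * (4*ω^2 - 1)) ≤ 4*ω - 1 := by
    rw [Real.sqrt_le_left (by linarith)]; nlinarith [sq_nonneg (ω - 1)]
  linarith

lemma center_le_endpoint_iff (hω : 1/2 ≤ ω) :
    2/3 - ω/√3 ≤ 1/2 - √(4*ω^2 - 1)/(2*√3) ↔ ω ≤ 1/√3 := by
  have hs := sq_sqrt_three
  have hs1 : 1 < √3 := by nlinarith [Real.sqrt_nonneg 3]
  rw [sqrt_div_two_sqrt_three, div_sqrt_three, div_sqrt_three]
  calc _ ↔ √(3 * (4*ω^2 - 1)) ≤ 2*ω*√3 - 1 := by constructor <;> intro h <;> linarith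
    _ ↔ 3 * (4*ω^2 - 1) ≤ (2*ω*√3 - 1)^2 := Real.sqrt_le_left (by nlinarith)
    _ ↔ _ := by constructor <;> intro h <;> nlinarith

end CubicJump

open CubicJump

theorem maximal_jump_cubic_general
    (ω : ℝ) (hω : ω ∈ Ioo (0:ℝ) 1)
    (α : ℝ) (hα : α = (2 - ω)/3)
    (D : ℝ → ℝ) (hD : ∀ u, D u = 3*u^2 - 4*u + (4 - ω^2)/3)
    (Δ : ℝ → ℝ) (hΔ : ∀ u, Δ u = -3*u^2 + 4*u - 4/3 + 4*ω^2/3)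
    (η : ℝ → ℝ) (hη : ∀ u, η u = (2 - u + Real.sqrt (Δ u))/2)
    (j : ℝ → ℝ) (hj : ∀ u, j u = η u - u)
    (Iω : Set ℝ)
    (hIω : (ω ≤ 1/2 → Iω = Icc (α - ω/3) α) ∧
      (1/2 < ω → Iω = Icc (α - ω/3) (1/2 - Real.sqrt (4*ω^2 - 1)/(2*Real.sqrt 3)))) :
    (ω ≤ 1/Real.sqrt 3 →
      (2/3 - ω/Real.sqrt 3) ∈ Iω ∧
      (∀ u ∈ Iω, j u ≤ j (2/3 - ω/Real.sqrt 3)) ∧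
      D (2/3 - ω/Real.sqrt 3) = D (η (2/3 - ω/Real.sqrt 3)) ∧
      (∀ u ∈ Iω, D u = D (η u) → u = 2/3 - ω/Real.sqrt 3)) ∧
    (1/Real.sqrt 3 < ω →
      (1/2 - Real.sqrt (4*ω^2 - 1)/(2*Real.sqrt 3)) ∈ Iω ∧
      ∀ u ∈ Iω, j u ≤ j (1/2 - Real.sqrt (4*ω^2 - 1)/(2*Real.sqrt 3))) := by
  have hω₀ : 0 ≤ ω := hω.1.le
  obtain rfl : Δ = disc ω := funext hΔ
  obtain rfl : η = eta ω := funext hη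
  obtain rfl : j = jump ω := funext hj
  obtain rfl : D = derivP ω := funext hD
  subst hα
  have hlower : (2 - ω)/3 - ω/3 = (2 - 2*ω)/3 := by ring
  rw [hlower] at hIω
  have hsub : Iω ⊆ Ico ((2 - 2*ω)/3) (2/3) := by
    intro u hu
    rcases le_or_gt ω (1/2) with h | h
    · rw [hIω.1 h] at hu
      exact ⟨hu.1, by linarith [hu.2, hω.1]⟩
    · rw [hIω.2 h] at hu
      have : 0 ≤ √(4*ω^2 - 1)/(2*√3) := by positivity
      exact ⟨hu.1, by linarith [hu.2]⟩
  refine ⟨fun hω₃ => ⟨?_, ?_, derivP_eta_center hω₀, ?_⟩, fun hω₃ => ?_⟩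
  · rcases le_or_gt ω (1/2) with h | h
    · rw [hIω.1 h]; exact center_mem_Icc hω₀
    · rw [hIω.2 h]; exact ⟨(center_mem_Icc hω₀).1, (center_le_endpoint_iff h.le).2 hω₃⟩
  · exact fun u hu => (jump_le hω₀ (hsub hu).1).trans (jump_center hω₀).ge
  · exact fun u hu => eq_center_of_derivP_eq hω₀ (hsub hu).2
  · have h : 1/2 < ω := lt_trans (one_div_lt_one_div_of_lt (by positivity)
      ((Real.sqrt_lt' (by norm_num)).2 (by norm_num))) hω₃
    have hend := le_of_not_ge ((center_le_endpoint_iff h.le).not.2 hω₃.not_ge)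
    rw [hIω.2 h]
    exact ⟨⟨lower_le_endpoint (by linarith), le_rfl⟩, fun u hu => jump_mono hω₀ hu.1 hu.2 hend⟩

/-- **Proposition 2.4 (maximal jump)**: with `j(u) = η(u) − u` on `I_ω`:
if `ω ≤ 1/√3`, the jump attains its maximum over `I_ω` at
`u = 2/3 − ω/√3` — the unique point of `I_ω` where `D(u) = D(η(u))`; if
`ω > 1/√3`, it attains its maximum at the right endpoint
`u = 1/2 − √(4ω²−1)/(2√3)` of `I_ω`. -/
theorem maximal_jump_cubic
    (ω : ℝ) (hω : ω ∈ Ioo (0:ℝ) 1)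
    (α β : ℝ) (hα : α = (2 - ω)/3) (hβ : β = (2 + ω)/3)
    (D : ℝ → ℝ) (hD : ∀ u, D u = 3*u^2 - 4*u + (4 - ω^2)/3)
    (Δ : ℝ → ℝ) (hΔ : ∀ u, Δ u = -3*u^2 + 4*u - 4/3 + 4*ω^2/3)
    (η : ℝ → ℝ) (hη : ∀ u, η u = (2 - u + Real.sqrt (Δ u))/2)
    (j : ℝ → ℝ) (hj : ∀ u, j u = η u - u)
    (Iω : Set ℝ)
    (hIω : (ω ≤ 1/2 → Iω = Icc (α - ω/3) α) ∧
      (1/2 < ω → Iω = Icc (α - ω/3) (1/2 - Real.sqrt (4*ω^2 - 1)/(2*Real.sqrt 3)))) :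
    (ω ≤ 1/Real.sqrt 3 →
      (2/3 - ω/Real.sqrt 3) ∈ Iω ∧
      (∀ u ∈ Iω, j u ≤ j (2/3 - ω/Real.sqrt 3)) ∧
      D (2/3 - ω/Real.sqrt 3) = D (η (2/3 - ω/Real.sqrt 3)) ∧
      (∀ u ∈ Iω, D u = D (η u) → u = 2/3 - ω/Real.sqrt 3)) ∧
    (1/Real.sqrt 3 < ω →
      (1/2 - Real.sqrt (4*ω^2 - 1)/(2*Real.sqrt 3)) ∈ Iω ∧
      ∀ u ∈ Iω, j u ≤ j (1/2 - Real.sqrt (4*ω^2 - 1)/(2*Real.sqrt 3))) :=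
  maximal_jump_cubic_general ω hω α hα D hD Δ hΔ η hη j hj Iω hIω
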